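/- Fix θ > 0, a positive integer t with t² + 1 ≥ √(2π), and σ with 0 < σ ≤ 1. Set κ_t = log((t² + 1)/√(2π)) / log(1 + θ/2), and let β have the gamma distribution Γ(κ_t, θ) with shape κ_t and scale θ. Then ∫₀^∞ ( ∫_ℝ max(x, 0) dN(-√b·σ, σ²)(x) ) dΓ(κ_t, θ)(b) ≤ 1/(t² + 1); that is, if conditionally on β = b the random variable X has the Gaussian distribution N(-√b·σ, σ²), then E[X·1{X ≥ 0}] ≤ 1/(t² + 1). -/

import Mathlib

/-!
The conditional mean `m = -√b σ` is nonpositive, so `x⁺ ≤ (x - m) 1{x > 0}`, and the Gaussian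
integral of `x - m` over `x > 0` is explicit: `E[X⁺ | β = b] ≤ σ e^{-b/2} / √(2π) ≤ e^{-b/2} / √(2π)`.
Averaging over `β` produces the moment generating function of `Γ(κ_t, θ)` at `-1/2`, which is
`(1 + θ/2)^{-κ_t} = √(2π) / (t² + 1)`; this is exactly how `κ_t` was chosen.
-/

open MeasureTheory ProbabilityTheory Real Filter Set
open scoped NNReal Topology

section Gamma

variable {a r : ℝ}

-- Mathlib's `Gamma 0 = 0` makes the density vanish identically.
lemma gammaMeasure_zero_left (r : ℝ) : gammaMeasure 0 r = 0 := by
  have : gammaPDF 0 r = 0 := by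
    ext x
    simp [gammaPDF_eq, Real.Gamma_zero]
  rw [gammaMeasure, this, withDensity_zero]

lemma integral_gammaMeasure_eq_integral_mul (ha : 0 < a) (hr : 0 < r) (f : ℝ → ℝ) :
    ∫ x, f x ∂gammaMeasure a r = ∫ x, gammaPDFReal a r x * f x := by
  rw [gammaMeasure, integral_withDensity_eq_integral_toReal_smul (f := gammaPDF a r)
    (measurable_gammaPDFReal a r).ennreal_ofReal (ae_of_all _ fun _ ↦ ENNReal.ofReal_lt_top)]
  simp only [gammaPDF, ENNReal.toReal_ofReal (gammaPDFReal_nonneg ha hr _), smul_eq_mul]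

lemma integral_gammaPDFReal_eq_one (ha : 0 < a) (hr : 0 < r) : ∫ x, gammaPDFReal a r x = 1 := by
  rw [integral_eq_lintegral_of_nonneg_ae (ae_of_all _ (gammaPDFReal_nonneg ha hr))
    (measurable_gammaPDFReal a r).aestronglyMeasurable]
  exact congrArg ENNReal.toReal (lintegral_gammaPDF_eq_one ha hr)

lemma gammaPDFReal_mul_exp_mul {t : ℝ} (hr : 0 ≤ r) (ht : t < r) (x : ℝ) :
    gammaPDFReal a r x * exp (t * x) = (r / (r - t)) ^ a * gammaPDFReal a (r - t) x := by
  have hrt : 0 < r - t := sub_pos.2 ht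
  unfold gammaPDFReal
  split_ifs
  · rw [div_rpow hr hrt.le, show -((r - t) * x) = -(r * x) + t * x by ring, exp_add]
    field_simp [(rpow_pos_of_pos hrt a).ne']
  · simp

lemma mgf_id_gammaMeasure {t : ℝ} (ha : 0 < a) (hr : 0 < r) (ht : t < r) :
    mgf id (gammaMeasure a r) t = (r / (r - t)) ^ a := by
  simp only [mgf, id, integral_gammaMeasure_eq_integral_mul ha hr,
    gammaPDFReal_mul_exp_mul hr.le ht, integral_const_mul,
    integral_gammaPDFReal_eq_one ha (sub_pos.2 ht), mul_one]

end Gamma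

section Gaussian

variable {m v : ℝ}

lemma integrable_sub_mul_exp_neg_sq_div (hv : 0 < v) :
    Integrable fun x ↦ (x - m) * exp (-(x - m) ^ 2 / (2 * v)) := by
  refine ((integrable_mul_exp_neg_mul_sq (b := (2 * v)⁻¹) (by positivity)).comp_sub_right m).congr
    (ae_of_all _ fun x ↦ ?_)
  simp only [neg_mul, div_eq_inv_mul, mul_neg]

lemma integral_Ioi_sub_mul_exp_neg_sq_div (hv : 0 < v) (c : ℝ) :
    ∫ x in Ioi c, (x - m) * exp (-(x - m) ^ 2 / (2 * v)) = v * exp (-(c - m) ^ 2 / (2 * v)) := by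
  have hderiv (x : ℝ) : HasDerivAt (fun x ↦ -v * exp (-(x - m) ^ 2 / (2 * v)))
      ((x - m) * exp (-(x - m) ^ 2 / (2 * v))) x := by
    have hexponent : HasDerivAt (fun x ↦ -(x - m) ^ 2 / (2 * v)) (-(2 * (x - m)) / (2 * v)) x := by
      simpa using (((hasDerivAt_id x).sub_const m).pow 2).neg.div_const (2 * v)
    refine (hexponent.exp.const_mul (-v)).congr_deriv ?_
    field_simp
  have hlim : Tendsto (fun x ↦ -v * exp (-(x - m) ^ 2 / (2 * v))) atTop (𝓝 (-v * 0)) :=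
    (tendsto_exp_atBot.comp ((tendsto_neg_atTop_atBot.comp ((tendsto_pow_atTop two_ne_zero).comp
      (tendsto_atTop_add_const_right _ (-m) tendsto_id))).atBot_div_const
        (by positivity))).const_mul _
  rw [integral_Ioi_of_hasDerivAt_of_tendsto' (fun x _ ↦ hderiv x)
    (integrable_sub_mul_exp_neg_sq_div hv).integrableOn hlim]
  ring

lemma integral_max_zero_gaussianReal_le (hm : m ≤ 0) {v : ℝ≥0} (hv : v ≠ 0) :
    ∫ x, max x 0 ∂gaussianReal m v ≤ √v / √(2 * π) * exp (-m ^ 2 / (2 * v)) := by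
  have hv' : (0 : ℝ) < v := NNReal.coe_pos.2 (pos_iff_ne_zero.2 hv)
  set tail := fun x : ℝ ↦ (√(2 * π * v))⁻¹ * ((x - m) * exp (-(x - m) ^ 2 / (2 * v)))
  have hle (x : ℝ) : gaussianPDFReal m v x * max x 0 ≤ (Ioi 0).indicator tail x := by
    rcases le_or_gt x 0 with hx | hx
    · rw [max_eq_right hx, mul_zero, indicator_of_notMem (show x ∉ Ioi 0 from not_lt.2 hx)]
    · rw [indicator_of_mem (show x ∈ Ioi 0 from hx), max_eq_left hx.le, gaussianPDFReal,
        mul_assoc, mul_comm (exp _)]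
      dsimp only [tail]
      gcongr
      linarith
  calc ∫ x, max x 0 ∂gaussianReal m v
      = ∫ x, gaussianPDFReal m v x * max x 0 := integral_gaussianReal_eq_integral_smul hv
    _ ≤ ∫ x, (Ioi 0).indicator tail x :=
        integral_mono_of_nonneg
          (ae_of_all _ fun x ↦ mul_nonneg (gaussianPDFReal_nonneg _ _ _) (le_max_right _ _))
          (((integrable_sub_mul_exp_neg_sq_div hv').const_mul _).indicator measurableSet_Ioi)
          (ae_of_all _ hle)
    _ = √v / √(2 * π) * exp (-m ^ 2 / (2 * v)) := by
        rw [integral_indicator measurableSet_Ioi, integral_const_mul,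
          integral_Ioi_sub_mul_exp_neg_sq_div hv', sqrt_mul (by positivity)]
        field_simp
        rw [sq_sqrt hv'.le, zero_sub, neg_sq]

end Gaussian

lemma integral_max_zero_gaussianReal_neg_sqrt_mul_le {σ : ℝ} (hσ : 0 < σ) (hσ1 : σ ≤ 1) (b : ℝ) :
    ∫ x, max x 0 ∂gaussianReal (-√b * σ) ⟨σ ^ 2, sq_nonneg σ⟩ ≤ exp (-1 / 2 * b) / √(2 * π) := by
  have hvar : (⟨σ ^ 2, sq_nonneg σ⟩ : ℝ≥0) ≠ 0 := by
    simp [hσ.ne']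
  refine (integral_max_zero_gaussianReal_le (by nlinarith [sqrt_nonneg b]) hvar).trans ?_
  -- `√b ^ 2 = max b 0`, so no sign condition on `b` is needed
  have hexp : -(-√b * σ) ^ 2 / (2 * σ ^ 2) ≤ -1 / 2 * b :=
    calc -(-√b * σ) ^ 2 / (2 * σ ^ 2) = -max b 0 / 2 := by
          rw [mul_pow, neg_sq, sq_sqrt']
          field_simp
      _ ≤ -1 / 2 * b := by linarith [le_max_left b 0]
  change √(σ ^ 2) / √(2 * π) * exp (-(-√b * σ) ^ 2 / (2 * σ ^ 2)) ≤ _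
  rw [sqrt_sq hσ.le, div_mul_eq_mul_div, mul_comm]
  gcongr
  exact (mul_le_of_le_one_right (exp_pos _).le hσ1).trans (exp_le_exp.2 hexp)

theorem rgpucb_R2_term_bound_general
    (θ : ℝ) (hθ : 0 < θ) (t : ℕ)
    (htπ : Real.sqrt (2 * Real.pi) ≤ (t : ℝ) ^ 2 + 1)
    (σ : ℝ) (hσ : 0 < σ) (hσ1 : σ ≤ 1) :
    ∫ b, (∫ x, max x 0 ∂(gaussianReal (-Real.sqrt b * σ) ⟨σ ^ 2, sq_nonneg σ⟩))
        ∂(gammaMeasure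
            (Real.log (((t : ℝ) ^ 2 + 1) / Real.sqrt (2 * Real.pi)) / Real.log (1 + θ / 2))
            (1 / θ))
      ≤ 1 / ((t : ℝ) ^ 2 + 1) := by
  set κ := log (((t : ℝ) ^ 2 + 1) / √(2 * π)) / log (1 + θ / 2)
  have hsπ : 0 < √(2 * π) := by positivity
  have hlog : 0 < log (1 + θ / 2) := log_pos (by linarith)
  have hκ0 : 0 ≤ κ := div_nonneg (log_nonneg ((one_le_div hsπ).2 htπ)) hlog.le
  rcases hκ0.eq_or_lt with hκ | hκ
  · rw [← hκ, gammaMeasure_zero_left, integral_zero_measure]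
    positivity
  have hrate : 0 < 1 / θ := by positivity
  have := isProbabilityMeasure_gammaMeasure hκ hrate
  have hbase : 1 / θ / (1 / θ - -1 / 2) = (1 + θ / 2)⁻¹ := by
    field_simp
    rw [sub_neg_eq_add, add_comm, div_self (by positivity)]
  have hmgf : mgf id (gammaMeasure κ (1 / θ)) (-1 / 2) = (((t : ℝ) ^ 2 + 1) / √(2 * π))⁻¹ := by
    rw [mgf_id_gammaMeasure hκ hrate (by linarith), hbase, inv_rpow (by positivity)]
    -- `κ` is `logb (1 + θ / 2) ((t ^ 2 + 1) / √(2 * π))` by unfolding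
    exact congrArg _ (rpow_logb (by positivity) (by linarith) (by positivity))
  have hint : Integrable (fun b ↦ exp (-1 / 2 * id b)) (gammaMeasure κ (1 / θ)) :=
    mgf_pos_iff.1 (by rw [hmgf]; positivity)
  calc _ ≤ ∫ b, exp (-1 / 2 * id b) / √(2 * π) ∂gammaMeasure κ (1 / θ) :=
        integral_mono_of_nonneg (ae_of_all _ fun b ↦ integral_nonneg fun x ↦ le_max_right x 0)
          (hint.div_const _)
          (ae_of_all _ (integral_max_zero_gaussianReal_neg_sqrt_mul_le hσ hσ1))
    _ = 1 / ((t : ℝ) ^ 2 + 1) := by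
        rw [integral_div]
        change mgf id _ (-1 / 2) / _ = _
        rw [hmgf]
        field_simp

theorem rgpucb_R2_term_bound
    (θ : ℝ) (hθ : 0 < θ) (t : ℕ) (ht : 0 < t)
    (htπ : Real.sqrt (2 * Real.pi) ≤ (t : ℝ) ^ 2 + 1)
    (σ : ℝ) (hσ : 0 < σ) (hσ1 : σ ≤ 1) :
    ∫ b, (∫ x, max x 0 ∂(gaussianReal (-Real.sqrt b * σ) ⟨σ ^ 2, sq_nonneg σ⟩))
        ∂(gammaMeasure
            (Real.log (((t : ℝ) ^ 2 + 1) / Real.sqrt (2 * Real.pi)) / Real.log (1 + θ / 2))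
            (1 / θ))
      ≤ 1 / ((t : ℝ) ^ 2 + 1) :=
  rgpucb_R2_term_bound_general θ hθ t htπ σ hσ hσ1
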